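/- arXiv:0804.4427 — 2 statements merged into one kernel-verified Lean document; each statement's English description precedes it below -/
import Mathlib

section
/- Every linear isometry ψ : L^1(ν) → L^1(υ) between L^1 spaces of positive measures preserves disjointness: if f, g ∈ L^1(ν) have ν-essentially disjoint supports, then ψ(f) and ψ(g) have υ-essentially disjoint supports. -/
/-!
Pointwise `|a + b| + |a - b| = 2 max(|a|, |b|) = 2 (|a| + |b|) - 2 min(|a|, |b|)`, so integrating
shows that `f, g ∈ L¹` are essentially disjoint iff `‖f + g‖ + ‖f - g‖ = 2 (‖f‖ + ‖g‖)`.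
This condition involves only norms of linear combinations of `f` and `g`, hence is preserved by
linear isometries.
-/

open MeasureTheory

theorem abs_add_add_abs_sub_add_two_mul_min (a b : ℝ) :
    |a + b| + |a - b| + 2 * min |a| |b| = 2 * (|a| + |b|) := by
  rcases le_total 0 a with ha | ha <;> rcases le_total 0 b with hb | hb <;>
    rcases le_total 0 (a + b) with h | h <;> rcases le_total 0 (a - b) with h' | h' <;>
    simp only [abs_of_nonneg, abs_of_nonpos, *] <;>
    (first | rw [min_eq_left (by linarith)] | rw [min_eq_right (by linarith)]) <;> linarith

theorem min_abs_eq_zero_iff {a b : ℝ} : min |a| |b| = 0 ↔ a = 0 ∨ b = 0 := by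
  rw [min_def]
  split_ifs <;> grind [abs_nonneg, abs_eq_zero]

namespace MeasureTheory.L1

variable {Ω : Type*} [MeasurableSpace Ω] {μ : Measure Ω}

theorem integrable_min_abs (f g : Lp ℝ 1 μ) : Integrable (fun x ↦ min |f x| |g x|) μ :=
  (integrable_coeFn f).abs.inf (integrable_coeFn g).abs

theorem norm_eq_integral_abs_add (f g : Lp ℝ 1 μ) : ‖f + g‖ = ∫ x, |f x + g x| ∂μ := by
  rw [norm_eq_integral_norm]
  exact integral_congr_ae <| (Lp.coeFn_add f g).mono fun x hx ↦ by
    simp only [hx, Pi.add_apply, Real.norm_eq_abs]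

theorem norm_eq_integral_abs_sub (f g : Lp ℝ 1 μ) : ‖f - g‖ = ∫ x, |f x - g x| ∂μ := by
  rw [norm_eq_integral_norm]
  exact integral_congr_ae <| (Lp.coeFn_sub f g).mono fun x hx ↦ by
    simp only [hx, Pi.sub_apply, Real.norm_eq_abs]

theorem norm_add_add_norm_sub_add_two_mul_integral_min (f g : Lp ℝ 1 μ) :
    ‖f + g‖ + ‖f - g‖ + 2 * ∫ x, min |f x| |g x| ∂μ = 2 * (‖f‖ + ‖g‖) := by
  have hf := integrable_coeFn f
  have hg := integrable_coeFn g
  have hadd : Integrable (fun x ↦ |f x + g x|) μ := (hf.add hg).abs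
  have hsub : Integrable (fun x ↦ |f x - g x|) μ := (hf.sub hg).abs
  have hadd_sub : Integrable (fun x ↦ |f x + g x| + |f x - g x|) μ := hadd.add hsub
  have key : ∫ x, (|f x + g x| + |f x - g x| + 2 * min |f x| |g x|) ∂μ =
      ∫ x, 2 * (|f x| + |g x|) ∂μ := by
    simp only [abs_add_add_abs_sub_add_two_mul_min]
  rw [MeasureTheory.integral_add hadd_sub ((integrable_min_abs f g).const_mul 2),
    MeasureTheory.integral_add hadd hsub, integral_const_mul, integral_const_mul,
    MeasureTheory.integral_add hf.abs hg.abs] at key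
  simpa only [norm_eq_integral_abs_add, norm_eq_integral_abs_sub, norm_eq_integral_norm f,
    norm_eq_integral_norm g, Real.norm_eq_abs] using key

theorem integral_min_abs_eq_zero_iff (f g : Lp ℝ 1 μ) :
    ∫ x, min |f x| |g x| ∂μ = 0 ↔ μ {x | f x ≠ 0 ∧ g x ≠ 0} = 0 := by
  rw [integral_eq_zero_iff_of_nonneg (fun x ↦ by positivity) (integrable_min_abs f g),
    Filter.EventuallyEq, ae_iff]
  simp [min_abs_eq_zero_iff]

theorem measure_setOf_ne_zero_and_ne_zero_eq_zero_iff (f g : Lp ℝ 1 μ) :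
    μ {x | f x ≠ 0 ∧ g x ≠ 0} = 0 ↔ ‖f + g‖ + ‖f - g‖ = 2 * (‖f‖ + ‖g‖) := by
  rw [← integral_min_abs_eq_zero_iff, ← norm_add_add_norm_sub_add_two_mul_integral_min f g]
  constructor <;> intro h <;> linarith

end MeasureTheory.L1

/-- every linear isometry `ψ : L^1(ν) → L^1(υ)` preserves essential
disjointness of supports. -/
theorem stmt3 {Ω₁ Ω₂ : Type*} [MeasurableSpace Ω₁] [MeasurableSpace Ω₂]
    (ν : Measure Ω₁) (υ : Measure Ω₂)
    (ψ : Lp ℝ 1 ν →ₗᵢ[ℝ] Lp ℝ 1 υ) (f g : Lp ℝ 1 ν)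
    (hfg : ν {x | f x ≠ 0 ∧ g x ≠ 0} = 0) :
    υ {y | (ψ f) y ≠ 0 ∧ (ψ g) y ≠ 0} = 0 := by
  rw [L1.measure_setOf_ne_zero_and_ne_zero_eq_zero_iff] at hfg ⊢
  rwa [← map_add, ← map_sub, ψ.norm_map, ψ.norm_map, ψ.norm_map, ψ.norm_map]
end

section
/- Let (Ω, Σ, μ) be a positive measure space. The group of surjective linear isometries of real L^∞(μ), with the strong operator topology, is totally separated: for any two distinct isometries T ≠ S there exist disjoint SOT-open sets U, V covering the whole group with T ∈ U and S ∈ V. -/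
open MeasureTheory ENNReal

/-- The strong operator topology on the group of surjective linear isometries. -/
def sot (R E : Type*) [Semiring R] [SeminormedAddCommGroup E] [Module R E] :
    TopologicalSpace (E ≃ₗᵢ[R] E) :=
  TopologicalSpace.induced (fun T => (⇑T : E → E)) Pi.topologicalSpace

/-!
The sign functions `u` (`|u| = 1` a.e.) are exactly the extreme points of the unit ball of
`L^∞(μ)`, so every surjective linear isometry maps them to sign functions, and two distinct
sign functions are at distance `2`. The greedy signed binary expansion `f = ∑ 2⁻ᵏ⁻¹ sₖ` of a
function `f` in the unit ball shows that the sign functions span a dense subspace; hence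
`T ≠ S` differ at some sign function `u`, and `{g | g u = T u} = {g | ‖g u - T u‖ < 2}` is
SOT-clopen.
-/

open Metric

attribute [local instance] sot

theorem continuous_sot_apply {R E : Type*} [Semiring R] [SeminormedAddCommGroup E] [Module R E]
    (x : E) : Continuous fun T : E ≃ₗᵢ[R] E => T x :=
  (continuous_apply x).comp (continuous_induced_dom (f := fun T : E ≃ₗᵢ[R] E => (⇑T : E → E)))

theorem LinearIsometryEquiv.image_extremePoints_closedBall {E : Type*} [NormedAddCommGroup E]
    [NormedSpace ℝ E] (T : E ≃ₗᵢ[ℝ] E) (r : ℝ) :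
    T '' Set.extremePoints ℝ (closedBall 0 r) = Set.extremePoints ℝ (closedBall 0 r) := by
  rw [image_extremePoints, ← T.coe_toIsometryEquiv, IsometryEquiv.image_closedBall,
    T.coe_toIsometryEquiv, map_zero]

namespace MeasureTheory.Lp

variable {Ω E : Type*} [MeasurableSpace Ω] {μ : Measure Ω} [NormedAddCommGroup E]

theorem norm_le_iff_ae_norm_le {f : Lp E ∞ μ} {C : ℝ} (hC : 0 ≤ C) :
    ‖f‖ ≤ C ↔ ∀ᵐ ω ∂μ, ‖f ω‖ ≤ C := by
  constructor
  · intro hf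
    have h := ae_le_lpNorm_exponent_top (Lp.memLp f)
    rw [← toReal_eLpNorm (Lp.aestronglyMeasurable f), ← Lp.norm_def] at h
    exact h.mono fun ω hω => hω.trans hf
  · intro h
    rw [Lp.norm_def, eLpNorm_exponent_top]
    exact ENNReal.toReal_le_of_le_ofReal hC (eLpNormEssSup_le_of_ae_bound h)

end MeasureTheory.Lp

section SignFunctions

variable {Ω : Type*} [MeasurableSpace Ω] {μ : Measure Ω}

theorem mem_closedBall_zero_one_iff_ae {f : Lp ℝ ∞ μ} :
    f ∈ closedBall 0 1 ↔ ∀ᵐ ω ∂μ, f ω ∈ Set.Icc (-1) 1 := by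
  simp only [mem_closedBall_zero_iff, Lp.norm_le_iff_ae_norm_le zero_le_one,
    Real.norm_eq_abs, abs_le, Set.mem_Icc]

def IsSign (μ : Measure Ω) (u : Lp ℝ ∞ μ) : Prop := ∀ᵐ ω ∂μ, |u ω| = 1

theorem IsSign.mem_extremePoints {u : Lp ℝ ∞ μ} (hu : IsSign μ u) :
    u ∈ Set.extremePoints ℝ (closedBall 0 1) := by
  refine ⟨?_, fun x₁ hx₁ x₂ hx₂ ⟨a, b, ha, hb, hab, hx⟩ => ?_⟩
  · rw [mem_closedBall_zero_one_iff_ae]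
    filter_upwards [hu] with ω hω
    rw [Set.mem_Icc, ← abs_le, hω]
  · have hcoe : ⇑u =ᵐ[μ] a • ⇑x₁ + b • ⇑x₂ :=
      hx ▸ (Lp.coeFn_add _ _).trans ((Lp.coeFn_smul a x₁).add (Lp.coeFn_smul b x₂))
    apply Lp.ext
    filter_upwards [hu, hcoe, mem_closedBall_zero_one_iff_ae.1 hx₁,
      mem_closedBall_zero_one_iff_ae.1 hx₂] with ω huω hω h₁ h₂
    have hext : u ω ∈ Set.extremePoints ℝ (Set.Icc (-1 : ℝ) 1) := by
      rw [Set.extremePoints_Icc (by norm_num)]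
      rcases (abs_eq zero_le_one).1 huω with h | h <;> simp [h]
    exact hext.2 h₁ h₂ ⟨a, b, ha, hb, hab, by simpa [smul_eq_mul] using hω.symm⟩

theorem isSign_of_mem_extremePoints {u : Lp ℝ ∞ μ}
    (hu : u ∈ Set.extremePoints ℝ (closedBall 0 1)) : IsSign μ u := by
  have hle : ∀ᵐ ω ∂μ, |u ω| ≤ 1 := by
    filter_upwards [mem_closedBall_zero_one_iff_ae.1 hu.1] with ω hω
    exact abs_le.2 hω
  have hmem : MemLp (fun ω => 1 - |u ω|) ∞ μ :=
    memLp_top_of_bound (aestronglyMeasurable_const.sub (Lp.aestronglyMeasurable u).norm) 1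
      (hle.mono fun ω hω => by
        rw [Real.norm_eq_abs, abs_le]; constructor <;> linarith [abs_nonneg (u ω)])
  -- `u` is the midpoint of `u ± (1 - |u|)`, both of which lie in the unit ball.
  set v := hmem.toLp _
  have hball : ∀ ε : ℝ, |ε| = 1 → u + ε • v ∈ closedBall 0 1 := by
    intro ε hε
    rw [mem_closedBall_zero_one_iff_ae]
    filter_upwards [hle, Lp.coeFn_add u (ε • v), Lp.coeFn_smul ε v, hmem.coeFn_toLp]
      with ω hω hadd hsmul hv
    rw [hadd, Pi.add_apply, hsmul, Pi.smul_apply, hv, smul_eq_mul, Set.mem_Icc]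
    rcases (abs_eq zero_le_one).1 hε with rfl | rfl <;> constructor <;>
      linarith [le_abs_self (u ω), neg_abs_le (u ω)]
  have hv0 : v = 0 := by
    have := hu.2 (hball (-1) (by simp)) (hball 1 (by simp))
      ⟨1 / 2, 1 / 2, by norm_num, by norm_num, by norm_num, by module⟩
    rwa [neg_one_smul, add_eq_left, neg_eq_zero] at this
  have hv : ⇑v =ᵐ[μ] 0 := hv0 ▸ Lp.coeFn_zero ℝ ∞ μ
  filter_upwards [hmem.coeFn_toLp, hv] with ω h₁ h₂
  rw [h₂, Pi.zero_apply] at h₁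
  linarith

theorem isSign_iff_mem_extremePoints {u : Lp ℝ ∞ μ} :
    IsSign μ u ↔ u ∈ Set.extremePoints ℝ (closedBall 0 1) :=
  ⟨IsSign.mem_extremePoints, isSign_of_mem_extremePoints⟩

theorem IsSign.map {u : Lp ℝ ∞ μ} (hu : IsSign μ u) (T : Lp ℝ ∞ μ ≃ₗᵢ[ℝ] Lp ℝ ∞ μ) :
    IsSign μ (T u) := by
  rw [isSign_iff_mem_extremePoints] at hu ⊢
  rw [← T.image_extremePoints_closedBall]
  exact Set.mem_image_of_mem T hu

theorem IsSign.eq_of_norm_sub_lt_two {u v : Lp ℝ ∞ μ} (hu : IsSign μ u) (hv : IsSign μ v)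
    (h : ‖u - v‖ < 2) : u = v := by
  have hle := (Lp.norm_le_iff_ae_norm_le (f := u - v) (norm_nonneg _)).1 le_rfl
  apply Lp.ext
  filter_upwards [hu, hv, hle, Lp.coeFn_sub u v] with ω huω hvω hω hsub
  rw [hsub, Pi.sub_apply, Real.norm_eq_abs] at hω
  rcases abs_eq_abs.1 (huω.trans hvω.symm) with heq | heq
  · exact heq
  · rw [heq, ← neg_add', abs_neg, ← two_mul, abs_mul, hvω] at hω
    norm_num at hω
    linarith

theorem exists_isSign_norm_two_smul_sub_le {f : Lp ℝ ∞ μ} (hf : ‖f‖ ≤ 1) :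
    ∃ s : Lp ℝ ∞ μ, IsSign μ s ∧ ‖(2 : ℝ) • f - s‖ ≤ 1 := by
  have hsign : Measurable fun x : ℝ => if 0 ≤ x then (1 : ℝ) else -1 :=
    Measurable.ite measurableSet_Ici measurable_const measurable_const
  have hmem : MemLp (fun ω => if 0 ≤ f ω then (1 : ℝ) else -1) ∞ μ :=
    memLp_top_of_bound
      (hsign.comp_aemeasurable (Lp.aestronglyMeasurable f).aemeasurable).aestronglyMeasurable 1
      (.of_forall fun ω => by split_ifs <;> simp)
  refine ⟨hmem.toLp _, ?_, ?_⟩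
  · filter_upwards [hmem.coeFn_toLp] with ω hω
    rw [hω]; split_ifs <;> simp
  · rw [Lp.norm_le_iff_ae_norm_le zero_le_one]
    filter_upwards [Lp.coeFn_sub ((2 : ℝ) • f) (hmem.toLp _), Lp.coeFn_smul (2 : ℝ) f,
      hmem.coeFn_toLp, (Lp.norm_le_iff_ae_norm_le zero_le_one).1 hf]
      with ω hsub hsmul hs hfω
    rw [hsub, Pi.sub_apply, hsmul, Pi.smul_apply, hs, smul_eq_mul, Real.norm_eq_abs]
    rw [Real.norm_eq_abs, abs_le] at hfω
    split_ifs <;> rw [abs_le] <;> constructor <;> linarith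

theorem exists_mem_span_isSign_norm_sub_le (N : ℕ) {f : Lp ℝ ∞ μ} (hf : ‖f‖ ≤ 1) :
    ∃ p ∈ Submodule.span ℝ {u | IsSign μ u}, ‖f - p‖ ≤ (1 / 2 : ℝ) ^ N := by
  induction N generalizing f with
  | zero => exact ⟨0, zero_mem _, by simpa using hf⟩
  | succ N ih =>
    obtain ⟨s, hs, hr⟩ := exists_isSign_norm_two_smul_sub_le hf
    obtain ⟨p, hp, hrp⟩ := ih hr
    refine ⟨(1 / 2 : ℝ) • s + (1 / 2 : ℝ) • p,
      add_mem (Submodule.smul_mem _ _ (Submodule.subset_span hs)) (Submodule.smul_mem _ _ hp), ?_⟩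
    have : f - ((1 / 2 : ℝ) • s + (1 / 2 : ℝ) • p) = (1 / 2 : ℝ) • ((2 : ℝ) • f - s - p) := by
      module
    rw [this, norm_smul, pow_succ']
    norm_num
    linarith

theorem dense_span_isSign :
    Dense (Submodule.span ℝ {u : Lp ℝ ∞ μ | IsSign μ u} : Set (Lp ℝ ∞ μ)) := by
  rw [Submodule.dense_iff_topologicalClosure_eq_top]
  refine Submodule.eq_top_of_nonempty_interior' _
    ⟨0, mem_interior.2 ⟨ball 0 1, fun f hf => ?_, isOpen_ball, mem_ball_self one_pos⟩⟩
  rw [Submodule.topologicalClosure_coe, Metric.mem_closure_iff]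
  intro ε hε
  obtain ⟨N, hN⟩ := exists_pow_lt_of_lt_one hε (by norm_num : (1 / 2 : ℝ) < 1)
  obtain ⟨p, hp, hfp⟩ := exists_mem_span_isSign_norm_sub_le N (mem_ball_zero_iff.1 hf).le
  exact ⟨p, hp, by rw [dist_eq_norm]; linarith⟩

theorem exists_isSign_apply_ne {T S : Lp ℝ ∞ μ ≃ₗᵢ[ℝ] Lp ℝ ∞ μ} (h : T ≠ S) :
    ∃ u, IsSign μ u ∧ T u ≠ S u := by
  by_contra! hTS
  have := ContinuousLinearMap.ext_on dense_span_isSign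
    (f := T.toContinuousLinearEquiv.toContinuousLinearMap)
    (g := S.toContinuousLinearEquiv.toContinuousLinearMap) hTS
  exact h (LinearIsometryEquiv.ext fun f => congr($this f))

theorem isClopen_sot_setOf_apply_eq {u w : Lp ℝ ∞ μ} (hu : IsSign μ u) (hw : IsSign μ w) :
    IsClopen {g : Lp ℝ ∞ μ ≃ₗᵢ[ℝ] Lp ℝ ∞ μ | g u = w} := by
  refine ⟨isClosed_eq (continuous_sot_apply u) continuous_const, ?_⟩
  have : {g : Lp ℝ ∞ μ ≃ₗᵢ[ℝ] Lp ℝ ∞ μ | g u = w} = (fun g => g u) ⁻¹' ball w 2 := by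
    ext g
    simp only [Set.mem_ofPred_eq, Set.mem_preimage, mem_ball, dist_eq_norm]
    exact ⟨fun h => by simp [h], (hu.map g).eq_of_norm_sub_lt_two hw⟩
  rw [this]
  exact isOpen_ball.preimage (continuous_sot_apply u)

end SignFunctions

/-- the group of surjective linear isometries of real `L^∞(μ)` is
totally separated in the strong operator topology: any two distinct isometries lie in
disjoint SOT-open sets whose union is the whole group. -/
theorem stmt13 {Ω : Type*} [MeasurableSpace Ω] (μ : Measure Ω)
    (T S : Lp ℝ ∞ μ ≃ₗᵢ[ℝ] Lp ℝ ∞ μ) (hTS : T ≠ S) :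
    ∃ U V : Set (Lp ℝ ∞ μ ≃ₗᵢ[ℝ] Lp ℝ ∞ μ),
      @IsOpen _ (sot ℝ (Lp ℝ ∞ μ)) U ∧ @IsOpen _ (sot ℝ (Lp ℝ ∞ μ)) V ∧
      T ∈ U ∧ S ∈ V ∧ U ∩ V = ∅ ∧ U ∪ V = Set.univ := by
  obtain ⟨u, hu, hTSu⟩ := exists_isSign_apply_ne hTS
  have hU := isClopen_sot_setOf_apply_eq hu (hu.map T)
  exact ⟨_, _, hU.isOpen, hU.compl.isOpen, rfl, fun h => hTSu h.symm,
    Set.inter_compl_self _, Set.union_compl_self _⟩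
end
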